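/- arXiv:1609.08897 — 3 statements merged into one kernel-verified Lean document; each statement's English description precedes it below -/
import Mathlib

section
/- With H₁, L₁, T, S as above (crossing-time conjugacy maps between a linear cocycle u and a nonlinear cocycle X, both with the cocycle property and strict exponential decay making crossing times unique), one has L₁(t₀, H₁(t₀,x₀)) = x₀ for all t₀ ∈ ℝ and x₀ ∈ ℝⁿ, and H₁(τ, L₁(τ,ξ)) = ξ for all τ ∈ ℝ and ξ ∈ ℝⁿ; in particular, for each fixed t, H₁(t,·) is a bijection of ℝⁿ with inverse L₁(t,·). -/
open Classical

abbrev Eu (n : ℕ) := EuclideanSpace ℝ (Fin n)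

/-- The crossing-time conjugacy map `H₁(t,x) = u(t, T(t,x), X(T(t,x),t,x))` for `x ≠ 0`,
and `H₁(t,0) = 0`. -/
noncomputable def H1 (n : ℕ) (u X : ℝ → ℝ → Eu n → Eu n) (T : ℝ → Eu n → ℝ)
    (t : ℝ) (x : Eu n) : Eu n :=
  if x = 0 then 0 else u t (T t x) (X (T t x) t x)

/-- The inverse map `L₁(t,ξ) = X(t, S(t,ξ), u(S(t,ξ),t,ξ))` for `ξ ≠ 0`, and `L₁(t,0) = 0`. -/
noncomputable def L1 (n : ℕ) (u X : ℝ → ℝ → Eu n → Eu n) (S : ℝ → Eu n → ℝ)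
    (t : ℝ) (ξ : Eu n) : Eu n :=
  if ξ = 0 then 0 else X t (S t ξ) (u (S t ξ) t ξ)

theorem stmt_11 (n : ℕ) (u X : ℝ → ℝ → Eu n → Eu n)
    (hucoc : ∀ t s τ (ξ : Eu n), u t s (u s τ ξ) = u t τ ξ)
    (hXcoc : ∀ t s τ (ξ : Eu n), X t s (X s τ ξ) = X t τ ξ)
    (huid : ∀ t (ξ : Eu n), u t t ξ = ξ) (hXid : ∀ t (ξ : Eu n), X t t ξ = ξ)
    (hu0 : ∀ t τ, u t τ (0 : Eu n) = 0) (hX0 : ∀ t τ, X t τ (0 : Eu n) = 0)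
    (T S : ℝ → Eu n → ℝ)
    (hT : ∀ t₀ (x₀ : Eu n), x₀ ≠ 0 →
      ‖X (T t₀ x₀) t₀ x₀‖ = 1 ∧ ∀ T', ‖X T' t₀ x₀‖ = 1 → T' = T t₀ x₀)
    (hS : ∀ τ (ξ : Eu n), ξ ≠ 0 →
      ‖u (S τ ξ) τ ξ‖ = 1 ∧ ∀ S', ‖u S' τ ξ‖ = 1 → S' = S τ ξ) :
    (∀ t₀ (x₀ : Eu n), L1 n u X S t₀ (H1 n u X T t₀ x₀) = x₀) ∧
    (∀ τ (ξ : Eu n), H1 n u X T τ (L1 n u X S τ ξ) = ξ) ∧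
    (∀ t, Function.Bijective (H1 n u X T t)) := by
  have hLH : ∀ t₀ (x₀ : Eu n), L1 n u X S t₀ (H1 n u X T t₀ x₀) = x₀ := by
    intro t₀ x₀
    by_cases hx : x₀ = 0
    · simp [H1, L1, hx]
    · have h1 := hT t₀ x₀ hx
      set Tt := T t₀ x₀ with hTt
      set η := X Tt t₀ x₀ with hη
      have hHne : u t₀ Tt η ≠ 0 := by
        intro h0
        have : u Tt t₀ (u t₀ Tt η) = u Tt Tt η := hucoc _ _ _ _
        rw [h0, hu0, huid] at this
        rw [← this] at h1
        simp at h1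
      have hH : H1 n u X T t₀ x₀ = u t₀ Tt η := by simp [H1, hx, hTt, hη]
      set ξ := u t₀ Tt η with hξ
      have hξne : ξ ≠ 0 := hHne
      have hback : u Tt t₀ ξ = η := by
        rw [hξ, hucoc, huid]
      have hSval : S t₀ ξ = Tt := by
        have := (hS t₀ ξ hξne).2 Tt (by rw [hback]; exact h1.1)
        exact this.symm
      have : L1 n u X S t₀ ξ = X t₀ (S t₀ ξ) (u (S t₀ ξ) t₀ ξ) := by
        simp [L1, hξne]
      rw [hH, this, hSval, hback, hη, hXcoc, hXid]
  have hHL : ∀ τ (ξ : Eu n), H1 n u X T τ (L1 n u X S τ ξ) = ξ := by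
    intro τ ξ
    by_cases hξ : ξ = 0
    · simp [H1, L1, hξ]
    · have h1 := hS τ ξ hξ
      set St := S τ ξ with hSt
      set η := u St τ ξ with hη
      have hLne : X τ St η ≠ 0 := by
        intro h0
        have : X St τ (X τ St η) = X St St η := hXcoc _ _ _ _
        rw [h0, hX0, hXid] at this
        rw [← this] at h1
        simp at h1
      have hL : L1 n u X S τ ξ = X τ St η := by simp [L1, hξ, hSt, hη]
      set x := X τ St η with hx
      have hxne : x ≠ 0 := hLne
      have hback : X St τ x = η := by
        rw [hx, hXcoc, hXid]
      have hTval : T τ x = St := by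
        exact Eq.symm ((hT τ x hxne).2 St (by rw [hback]; exact h1.1))
      have : H1 n u X T τ x = u τ (T τ x) (X (T τ x) τ x) := by
        simp [H1, hxne]
      rw [hL, this, hTval, hback, hη, hucoc, huid]
  refine ⟨hLH, hHL, fun t => ?_⟩
  exact Function.bijective_iff_has_inverse.2 ⟨L1 n u X S t, hLH t, hHL t⟩
end

section
/- Uniqueness of near-identity conjugacy: suppose for each initial data (τ,ξ,η) the 'difference system' z′(t) = W(t)z(t) + W₀(t)z(γ(t)) + h̄(t, z(t), z(γ(t)), (τ,ξ,η)) has a unique bounded solution χ(·,(τ,ξ,η)) on ℝ. If H̄ and K̄ are two maps ℝ × ℝⁿ → ℝⁿ such that both (a) are at bounded distance from the identity (sup |H̄(t,w) − w| < ∞ and sup |K̄(t,w) − w| < ∞) and (b) send every solution of the perturbed system to a solution of the target system, then H̄ = K̄, and moreover H̄(t, w(t)) = w(t) + χ(t, (τ, w(τ))) along each solution w of the perturbed system. -/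
theorem stmt_15 (n : ℕ) (SolPert SolTarget : Set (ℝ → Eu n))
    (sol : ℝ → Eu n → (ℝ → Eu n))
    (hsol : ∀ τ (ξ : Eu n), sol τ ξ ∈ SolPert ∧ sol τ ξ τ = ξ)
    (hsoluniq : ∀ w ∈ SolPert, ∀ τ, sol τ (w τ) = w)
    (χ : ℝ → ℝ → Eu n → Eu n)
    (hχbd : ∀ τ (ξ : Eu n), ∃ M, ∀ t, ‖χ t τ ξ‖ ≤ M)
    (hχsol : ∀ τ (ξ : Eu n), (fun t => sol τ ξ t + χ t τ ξ) ∈ SolTarget)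
    (hχuniq : ∀ τ (ξ : Eu n) (d : ℝ → Eu n), (∃ M, ∀ t, ‖d t‖ ≤ M) →
      (fun t => sol τ ξ t + d t) ∈ SolTarget → ∀ t, d t = χ t τ ξ)
    (H K : ℝ → Eu n → Eu n)
    (hHbd : ∃ M, ∀ t (w : Eu n), ‖H t w - w‖ ≤ M)
    (hKbd : ∃ M, ∀ t (w : Eu n), ‖K t w - w‖ ≤ M)
    (hHmap : ∀ w ∈ SolPert, (fun t => H t (w t)) ∈ SolTarget)
    (hKmap : ∀ w ∈ SolPert, (fun t => K t (w t)) ∈ SolTarget) :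
    (∀ t (ξ : Eu n), H t ξ = K t ξ) ∧
    (∀ w ∈ SolPert, ∀ τ t, H t (w t) = w t + χ t τ (w τ)) := by
  have key : ∀ (F : ℝ → Eu n → Eu n), (∃ M, ∀ t (w : Eu n), ‖F t w - w‖ ≤ M) →
      (∀ w ∈ SolPert, (fun t => F t (w t)) ∈ SolTarget) →
      ∀ w ∈ SolPert, ∀ τ t, F t (w t) = w t + χ t τ (w τ) := by
    intro F ⟨M, hM⟩ hFmap w hw τ t
    have hw' : sol τ (w τ) = w := hsoluniq w hw τ
    have hd := hχuniq τ (w τ) (fun t => F t (w t) - w t)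
      ⟨M, fun t => hM t (w t)⟩
      (by
        simpa [hw'] using hFmap w hw) t
    have : F t (w t) - w t = χ t τ (w τ) := by simpa [hw'] using hd
    linear_combination (norm := abel) this
  refine ⟨?_, key H hHbd hHmap⟩
  intro t ξ
  have hH := key H hHbd hHmap (sol t ξ) (hsol t ξ).1 t t
  have hK := key K hKbd hKmap (sol t ξ) (hsol t ξ).1 t t
  rw [(hsol t ξ).2] at hH hK
  rw [hH, hK]
end

section
/- Suppose a two-parameter kernel G₁ is built from a transition matrix Z₁ with |Z₁(t,s)| ≤ e^{−α(t−s)} for t ≥ s, fundamental matrix bounds |Φ₁(t,s)| ≤ ρ for t,s in a common partition interval, and intra-interval transition bounds |Z₁(t,s)| ≤ ρ₀ for t,s in a common partition interval, via G₁(t,s) = Z₁(t, t_r)Φ₁(t_r, s) (or Φ₁(t,s) near the endpoints) as in the paper, where the partition has mesh ≤ θ. Then |G₁(t,s)| ≤ K·max(ρρ₀, ρe^{αθ})·e^{−α(t−s)} for all t ≥ s, where K ≥ 1. -/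
open Set

theorem stmt_17 (n : ℕ) (K ρ ρ₀ α θ : ℝ)
    (hK : 1 ≤ K) (hρ : 1 ≤ ρ) (hρ₀ : 1 ≤ ρ₀) (hα : 0 < α) (hθ : 0 < θ)
    (tseq : ℤ → ℝ) (hmono : StrictMono tseq)
    (hmesh : ∀ i, tseq (i + 1) - tseq i ≤ θ)
    (Φ₁ Z₁ : ℝ → ℝ → Eu n →L[ℝ] Eu n)
    (hZdecay : ∀ t s, s ≤ t → ‖Z₁ t s‖ ≤ Real.exp (-α * (t - s)))
    (hZcoc : ∀ a b c, (Z₁ a b).comp (Z₁ b c) = Z₁ a c)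
    (hΦloc : ∀ i, ∀ t ∈ Icc (tseq i) (tseq (i + 1)), ∀ s ∈ Icc (tseq i) (tseq (i + 1)),
      ‖Φ₁ t s‖ ≤ ρ)
    (hZloc : ∀ i, ∀ t ∈ Icc (tseq i) (tseq (i + 1)), ∀ s ∈ Icc (tseq i) (tseq (i + 1)),
      ‖Z₁ t s‖ ≤ ρ₀)
    (G₁ : ℝ → ℝ → Eu n →L[ℝ] Eu n)
    (hG₁ : ∀ t s, s ≤ t →
      (∃ i c, c ∈ Icc (tseq i) (tseq (i + 1)) ∧ s ∈ Icc (tseq i) (tseq (i + 1)) ∧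
        G₁ t s = (Z₁ t c).comp (Φ₁ c s)) ∨
      (∃ i, t ∈ Icc (tseq i) (tseq (i + 1)) ∧ s ∈ Icc (tseq i) (tseq (i + 1)) ∧
        G₁ t s = Φ₁ t s)) :
    ∀ t s, s ≤ t →
      ‖G₁ t s‖ ≤ K * max (ρ * ρ₀) (ρ * Real.exp (α * θ)) * Real.exp (-α * (t - s)) := by
  intro t s hst
  have hE := Real.exp_pos (-α * (t - s))
  have hmaxK : max (ρ * ρ₀) (ρ * Real.exp (α * θ)) ≤ K * max (ρ * ρ₀) (ρ * Real.exp (α * θ)) := by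
    apply le_mul_of_one_le_left _ hK
    have : (0:ℝ) ≤ ρ * ρ₀ := by nlinarith
    exact le_trans this (le_max_left _ _)
  rcases hG₁ t s hst with ⟨i, c, hc, hs, hG⟩ | ⟨i, ht, hs, hG⟩
  · rw [hG]
    have h1 : ‖Z₁ t c‖ ≤ Real.exp (-α * (t - s)) * ρ₀ := by
      rw [← hZcoc t s c]
      calc ‖(Z₁ t s).comp (Z₁ s c)‖ ≤ ‖Z₁ t s‖ * ‖Z₁ s c‖ :=
            ContinuousLinearMap.opNorm_comp_le _ _
        _ ≤ Real.exp (-α * (t - s)) * ρ₀ :=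
            mul_le_mul (hZdecay t s hst) (hZloc i s hs c hc) (norm_nonneg _) hE.le
    have h2 : ‖Φ₁ c s‖ ≤ ρ := hΦloc i c hc s hs
    have h3 : ρ * ρ₀ ≤ K * max (ρ * ρ₀) (ρ * Real.exp (α * θ)) :=
      le_trans (le_max_left _ _) hmaxK
    calc ‖(Z₁ t c).comp (Φ₁ c s)‖ ≤ ‖Z₁ t c‖ * ‖Φ₁ c s‖ :=
          ContinuousLinearMap.opNorm_comp_le _ _
      _ ≤ (Real.exp (-α * (t - s)) * ρ₀) * ρ :=
          mul_le_mul h1 h2 (norm_nonneg _) (by positivity)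
      _ = (ρ * ρ₀) * Real.exp (-α * (t - s)) := by ring
      _ ≤ K * max (ρ * ρ₀) (ρ * Real.exp (α * θ)) * Real.exp (-α * (t - s)) := by
          exact mul_le_mul_of_nonneg_right h3 hE.le
  · rw [hG]
    have hts : t - s ≤ θ := by
      have := hmesh i
      have h1 := ht.1; have h2 := ht.2; have h3 := hs.1; have h4 := hs.2
      linarith
    have hexp : ρ ≤ ρ * Real.exp (α * θ) * Real.exp (-α * (t - s)) := by
      rw [mul_assoc, ← Real.exp_add]
      have : (0:ℝ) ≤ α * θ + -α * (t - s) := by nlinarith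
      nlinarith [Real.one_le_exp this]
    calc ‖Φ₁ t s‖ ≤ ρ := hΦloc i t ht s hs
      _ ≤ ρ * Real.exp (α * θ) * Real.exp (-α * (t - s)) := hexp
      _ ≤ K * max (ρ * ρ₀) (ρ * Real.exp (α * θ)) * Real.exp (-α * (t - s)) :=
          mul_le_mul_of_nonneg_right (le_trans (le_max_right _ _) hmaxK) hE.le
end
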